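/- Let p ≥ 1 be an integer, set δ = 1 if p is odd and δ = 2 if p is even, and let c_p(u) = u + ∑_{k=1}^{⌊p/2⌋} c_k u^{2k} with c_k = (−1)^{k+1}(2k)!/(4^k(k!)²(2k−1)). Then for every real u with 0 ≤ u < 1, |(1 + c_p(−u))·(1 + c_p(u)) − 1| ≤ (2√(1+u²) + a₁(u)·u^{p+1})·a₁(u)·u^{p+δ}, where a₁(u) = 1/(1+√(1−u²)). -/

import Mathlib

open scoped BigOperators

/-- `a₁(u) = 1/(1+√(1−u²))`. -/
noncomputable def a1 (u : ℝ) : ℝ := 1 / (1 + Real.sqrt (1 - u ^ 2))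

/-- `a₂(u) = (a₁(u) − 1/2)/u²`. -/
noncomputable def a2 (u : ℝ) : ℝ := (a1 u - 1 / 2) / u ^ 2

/-- `b₁(u) = u²a₁(u)²/√(1−u²) + 2a₁(u)`. -/
noncomputable def b1 (u : ℝ) : ℝ := u ^ 2 * a1 u ^ 2 / Real.sqrt (1 - u ^ 2) + 2 * a1 u

/-- `b₂(u) = a₁(u)²/√(1−u²) + 2a₂(u)`. -/
noncomputable def b2 (u : ℝ) : ℝ := a1 u ^ 2 / Real.sqrt (1 - u ^ 2) + 2 * a2 u

/-- `c_k = (−1)^{k+1}(2k)!/(4^k (k!)² (2k−1))`, the Taylor coefficients of `√(1+u²)−1`. -/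
noncomputable def ck (k : ℕ) : ℝ :=
  (-1 : ℝ) ^ (k + 1) * (Nat.factorial (2 * k) : ℝ) /
    ((4 : ℝ) ^ k * ((Nat.factorial k : ℝ)) ^ 2 * ((2 * k - 1 : ℕ) : ℝ))

/-- `c_p(u) = u + ∑_{k=1}^{⌊p/2⌋} c_k u^{2k}`, the degree-`p` truncation of
the Taylor series of `√(1+u²)+u−1` at `0`. -/
noncomputable def cpReal (p : ℕ) (u : ℝ) : ℝ :=
  u + ∑ k ∈ Finset.Icc 1 (p / 2), ck k * u ^ (2 * k)

/-!
With `x = u²` and `m = ⌊p/2⌋`, `1 + c_p(±u) = P(x) ± u`, where `P` is the degree-`m` Taylor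
polynomial of `√(1 + x)`, whose coefficients are `binom(1/2, n)`. Writing `s = √(1 + x)` and
`T = s - P(x)`, the product minus one is `(s - T)² - s² = T (T - 2s)`. For `n ≥ 1` the
coefficients `binom(1/2, n)` alternate in sign and decrease in modulus, so
`|T| ≤ xᵐ ∑_{n ≥ 1} |binom(1/2, n)| xⁿ = xᵐ (1 - √(1 - x)) = a₁(u) x^(m+1)`,
and `2m + 2 = p + δ ≥ p + 1`.
-/

open Finset

theorem Ring.succ_mul_choose_succ {R : Type*} [Field R] [CharZero R] (a : R) (n : ℕ) :
    (n + 1) * Ring.choose a (n + 1) = (a - n) * Ring.choose a n := by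
  rw [Ring.choose_eq_smul, Ring.choose_eq_smul, descPochhammer_succ_right,
    Polynomial.smeval_mul, Polynomial.smeval_sub, Polynomial.smeval_X, Polynomial.smeval_natCast,
    Nat.factorial_succ, smul_eq_mul, smul_eq_mul]
  have := Nat.factorial_ne_zero n
  push_cast
  field_simp
  simp

theorem Real.hasSum_choose_half_mul_pow {x : ℝ} (hx : |x| < 1) :
    HasSum (fun n ↦ Ring.choose (1 / 2 : ℝ) n * x ^ n) (√(1 + x)) := by
  have hx' : x ∈ Metric.eball (0 : ℝ) 1 := by
    rwa [mem_eball_zero_iff, Real.enorm_eq_ofReal_abs, ENNReal.ofReal_lt_one]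
  have := (Real.one_add_rpow_hasFPowerSeriesOnBall_zero (a := 1 / 2)).hasSum hx'
  simpa [Real.sqrt_eq_rpow, binomialSeries, FormalMultilinearSeries.coeff_ofScalars, mul_comm]
    using this

theorem choose_half_succ_succ (n : ℕ) :
    Ring.choose (1 / 2 : ℝ) (n + 2) =
      -((n + 1 / 2) / (n + 2)) * Ring.choose (1 / 2 : ℝ) (n + 1) := by
  have h := Ring.succ_mul_choose_succ (1 / 2 : ℝ) (n + 1)
  push_cast at h
  rw [show n + 1 + 1 = n + 2 from rfl] at h
  field_simp
  linear_combination 2 * h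

theorem neg_one_pow_mul_choose_half_succ_nonneg (n : ℕ) :
    0 ≤ (-1) ^ n * Ring.choose (1 / 2 : ℝ) (n + 1) := by
  induction n with
  | zero => norm_num [Ring.choose_one_right]
  | succ n ih =>
    rw [choose_half_succ_succ, pow_succ]
    have : 0 ≤ (n + 1 / 2 : ℝ) / (n + 2) := by positivity
    nlinarith

theorem abs_choose_half_succ (n : ℕ) :
    |Ring.choose (1 / 2 : ℝ) (n + 1)| = (-1) ^ n * Ring.choose (1 / 2 : ℝ) (n + 1) := by
  rw [← abs_of_nonneg (neg_one_pow_mul_choose_half_succ_nonneg n), abs_mul, abs_neg_one_pow,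
    one_mul]

theorem antitone_abs_choose_half_succ : Antitone fun n ↦ |Ring.choose (1 / 2 : ℝ) (n + 1)| := by
  refine antitone_nat_of_succ_le fun n ↦ ?_
  rw [choose_half_succ_succ, abs_mul, abs_neg, abs_of_nonneg (by positivity)]
  refine mul_le_of_le_one_left (abs_nonneg _) ?_
  rw [div_le_one (by positivity)]
  linarith

theorem Real.hasSum_abs_choose_half_mul_pow {x : ℝ} (hx : |x| < 1) :
    HasSum (fun n ↦ |Ring.choose (1 / 2 : ℝ) (n + 1)| * x ^ (n + 1)) (1 - √(1 - x)) := by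
  have h := (hasSum_nat_add_iff' 1).2 (Real.hasSum_choose_half_mul_pow (x := -x) (by rwa [abs_neg]))
  have hterm (n : ℕ) : |Ring.choose (1 / 2 : ℝ) (n + 1)| * x ^ (n + 1) =
      -(Ring.choose (1 / 2 : ℝ) (n + 1) * (-x) ^ (n + 1)) := by
    rw [abs_choose_half_succ, neg_pow, pow_succ]
    ring
  simp only [range_one, sum_singleton, Ring.choose_zero_right, pow_zero, mul_one,
    ← sub_eq_add_neg] at h
  simpa only [hterm, neg_sub] using h.neg

theorem Real.abs_sqrt_one_add_sub_sum_le {x : ℝ} (hx : |x| < 1) (m : ℕ) :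
    |√(1 + x) - ∑ n ∈ range (m + 1), Ring.choose (1 / 2 : ℝ) n * x ^ n| ≤
      |x| ^ (m + 1) / (1 + √(1 - |x|)) := by
  have hsum := Real.hasSum_choose_half_mul_pow hx
  have habs := Real.hasSum_abs_choose_half_mul_pow (x := |x|) (by rwa [abs_abs])
  have hnorm (j : ℕ) : ‖Ring.choose (1 / 2 : ℝ) (j + (m + 1)) * x ^ (j + (m + 1))‖ =
      |Ring.choose (1 / 2 : ℝ) (j + m + 1)| * |x| ^ (j + m + 1) := by
    rw [norm_mul, norm_pow, Real.norm_eq_abs, Real.norm_eq_abs, add_assoc]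
  have htail :
      Summable fun j ↦ ‖Ring.choose (1 / 2 : ℝ) (j + (m + 1)) * x ^ (j + (m + 1))‖ := by
    simpa only [hnorm, add_right_comm _ m 1] using (summable_nat_add_iff m).2 habs.summable
  have hsqrt : 1 - √(1 - |x|) = |x| / (1 + √(1 - |x|)) := by
    rw [eq_div_iff (by positivity)]
    linear_combination -Real.sq_sqrt (show 0 ≤ 1 - |x| by linarith)
  rw [← hsum.tsum_eq, ← hsum.summable.sum_add_tsum_nat_add (m + 1), add_sub_cancel_left]
  calc |∑' j, Ring.choose (1 / 2 : ℝ) (j + (m + 1)) * x ^ (j + (m + 1))|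
      ≤ ∑' j, ‖Ring.choose (1 / 2 : ℝ) (j + (m + 1)) * x ^ (j + (m + 1))‖ :=
        norm_tsum_le_tsum_norm htail
    _ ≤ ∑' j, |Ring.choose (1 / 2 : ℝ) (j + 1)| * |x| ^ (j + 1) * |x| ^ m := by
      refine htail.tsum_le_tsum (fun j ↦ ?_) (habs.summable.mul_right _)
      rw [hnorm, mul_assoc, ← pow_add, add_right_comm j 1 m]
      exact mul_le_mul_of_nonneg_right
        (antitone_abs_choose_half_succ (Nat.le_add_right j m)) (by positivity)
    _ = |x| ^ (m + 1) / (1 + √(1 - |x|)) := by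
      rw [tsum_mul_right, habs.tsum_eq, hsqrt]
      ring

theorem ck_succ_succ (k : ℕ) : ck (k + 2) = -((k + 1 / 2) / (k + 2)) * ck (k + 1) := by
  simp only [ck, show 2 * (k + 2) = 2 * (k + 1) + 1 + 1 by ring, Nat.factorial_succ,
    show 2 * (k + 1) + 1 + 1 - 1 = 2 * k + 3 by omega, show 2 * (k + 1) - 1 = 2 * k + 1 by omega]
  push_cast
  field_simp
  ring

/-- Stated at `k + 1` because `ck 0 = 0` (the factor `2 * 0 - 1` truncates to `0` in `ℕ`),
whereas `binom(1/2, 0) = 1`. -/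
theorem ck_succ_eq_choose_half (k : ℕ) : ck (k + 1) = Ring.choose (1 / 2 : ℝ) (k + 1) := by
  induction k with
  | zero => norm_num [ck, Ring.choose_one_right]
  | succ k ih => rw [ck_succ_succ, choose_half_succ_succ, ih]

theorem one_add_cpReal (p : ℕ) (u : ℝ) :
    1 + cpReal p u =
      ∑ n ∈ range (p / 2 + 1), Ring.choose (1 / 2 : ℝ) n * (u ^ 2) ^ n + u := by
  rw [cpReal, ← Ico_add_one_right_eq_Icc, sum_Ico_eq_sum_range, add_tsub_cancel_right,
    sum_range_succ']
  simp only [add_comm 1, ck_succ_eq_choose_half, ← pow_mul, Ring.choose_zero_right, pow_zero,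
    mul_one]
  ring

theorem cp_product_bound_general (p : ℕ) (u : ℝ) (h0 : 0 ≤ u) (h1 : u < 1) :
    |(1 + cpReal p (-u)) * (1 + cpReal p u) - 1| ≤
      (2 * Real.sqrt (1 + u ^ 2) + a1 u * u ^ (p + 1)) * a1 u *
        u ^ (p + if p % 2 = 1 then 1 else 2) := by
  have he : (p + if p % 2 = 1 then 1 else 2) = 2 * (p / 2 + 1) := by split_ifs <;> omega
  set e := p + if p % 2 = 1 then 1 else 2
  set s := √(1 + u ^ 2)
  set T := s - ∑ n ∈ range (p / 2 + 1), Ring.choose (1 / 2 : ℝ) n * (u ^ 2) ^ n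
  have ha1 : 0 ≤ a1 u := by unfold a1; positivity
  have hu2 : |u ^ 2| = u ^ 2 := abs_of_nonneg (sq_nonneg u)
  have hT : |T| ≤ a1 u * u ^ e := by
    have hx : |u ^ 2| < 1 := by rw [hu2]; nlinarith
    calc |T| ≤ (u ^ 2) ^ (p / 2 + 1) / (1 + √(1 - u ^ 2)) :=
          (Real.abs_sqrt_one_add_sub_sum_le hx (p / 2)).trans_eq (by rw [hu2])
      _ = a1 u * u ^ e := by rw [a1, he, pow_mul]; ring
  have hT2s : |T - 2 * s| ≤ 2 * s + a1 u * u ^ (p + 1) := by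
    have hTp : |T| ≤ a1 u * u ^ (p + 1) :=
      hT.trans (mul_le_mul_of_nonneg_left (pow_le_pow_of_le_one h0 h1.le (by omega)) ha1)
    have := abs_sub T (2 * s)
    rw [abs_of_nonneg (by positivity : 0 ≤ 2 * s)] at this
    linarith
  have hprod : (1 + cpReal p (-u)) * (1 + cpReal p u) - 1 = T * (T - 2 * s) := by
    rw [one_add_cpReal, one_add_cpReal, neg_sq]
    linear_combination Real.sq_sqrt (show 0 ≤ 1 + u ^ 2 by positivity)
  rw [hprod, abs_mul]
  calc |T| * |T - 2 * s| ≤ a1 u * u ^ e * (2 * s + a1 u * u ^ (p + 1)) :=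
        mul_le_mul hT hT2s (abs_nonneg _) (by positivity)
    _ = _ := by ring

/-- Lemma 8.8: bound on `(1+c_p(−u))(1+c_p(u)) − 1`. -/
theorem cp_product_bound (p : ℕ) (hp : 1 ≤ p) (u : ℝ) (h0 : 0 ≤ u) (h1 : u < 1) :
    |(1 + cpReal p (-u)) * (1 + cpReal p u) - 1| ≤
      (2 * Real.sqrt (1 + u ^ 2) + a1 u * u ^ (p + 1)) * a1 u *
        u ^ (p + if p % 2 = 1 then 1 else 2) :=
  cp_product_bound_general p u h0 h1
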